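/- Fix τ > 1 and let φ be the implicit function with e^{−2φ(x₂,x₃)}x₂² + e^{−2φ(x₂,x₃)/τ}x₃² = 1. Then the map Π : Ω → S¹ ⊂ ℝ², Π(x₁,x₂,x₃) = (e^{−φ(x₂,x₃)}x₂, e^{−φ(x₂,x₃)/τ}x₃), is a smooth submersion on Ω = {x ∈ ℝ³ : x₂²+x₃² ≠ 0}. -/

import Mathlib

/-- The open set `Ω = ℝ × (ℝ² \ {0})` in coordinates `(x₁,x₂,x₃) = (x 0,x 1,x 2)`. -/
def Omega : Set (Fin 3 → ℝ) := {x | (x 1) ^ 2 + (x 2) ^ 2 ≠ 0}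

/-- Fix `τ > 1` and let `φ` be the implicit function with
`e^{−2φ}x₂² + e^{−2φ/τ}x₃² = 1`.  Then
`Π(x₁,x₂,x₃) = (e^{−φ(x₂,x₃)}x₂, e^{−φ(x₂,x₃)/τ}x₃)` is smooth on `Ω`, takes
values in the unit circle `S¹ ⊂ ℝ²`, and is a submersion on `Ω` (its
differential is everywhere nonzero, hence of maximal rank `1` for a map into
the circle). -/
theorem submersion_onto_circle (τ : ℝ) (hτ : 1 < τ) (φ : ℝ × ℝ → ℝ)
    (hφ : ContDiffOn ℝ (⊤ : ℕ∞) φ {x | x ≠ 0})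
    (heq : ∀ x : ℝ × ℝ, x ≠ 0 →
      Real.exp (-2 * φ x) * x.1 ^ 2 + Real.exp (-2 * φ x / τ) * x.2 ^ 2 = 1) :
    ContDiffOn ℝ (⊤ : ℕ∞)
      (fun x : Fin 3 → ℝ =>
        ((Real.exp (-φ (x 1, x 2)) * x 1, Real.exp (-φ (x 1, x 2) / τ) * x 2) : ℝ × ℝ))
      Omega ∧
    (∀ x ∈ Omega,
      (Real.exp (-φ (x 1, x 2)) * x 1) ^ 2 +
        (Real.exp (-φ (x 1, x 2) / τ) * x 2) ^ 2 = 1) ∧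
    (∀ x ∈ Omega,
      fderiv ℝ
        (fun x : Fin 3 → ℝ =>
          ((Real.exp (-φ (x 1, x 2)) * x 1, Real.exp (-φ (x 1, x 2) / τ) * x 2) : ℝ × ℝ))
        x ≠ 0) := by
  have hτ0 : τ ≠ 0 := by positivity
  set π : (Fin 3 → ℝ) →L[ℝ] ℝ × ℝ :=
    (ContinuousLinearMap.proj 1 : (Fin 3 → ℝ) →L[ℝ] ℝ).prod
      (ContinuousLinearMap.proj 2 : (Fin 3 → ℝ) →L[ℝ] ℝ) with hπ
  have hmaps : ∀ x ∈ Omega, ((x 1, x 2) : ℝ × ℝ) ≠ 0 := by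
    intro x hx h
    apply hx
    have h1 : x 1 = 0 := congrArg Prod.fst h
    have h2 : x 2 = 0 := congrArg Prod.snd h
    simp [Omega, h1, h2]
  refine ⟨?_, ?_, ?_⟩
  · -- smoothness
    have hcomp : ContDiffOn ℝ (⊤ : ℕ∞) (fun x : Fin 3 → ℝ => φ (x 1, x 2)) Omega := by
      have := hφ.comp (π.contDiff.contDiffOn (s := Omega)) hmaps
      exact this
    have hx1 : ContDiffOn ℝ (⊤ : ℕ∞) (fun x : Fin 3 → ℝ => x 1) Omega :=
      (ContinuousLinearMap.proj 1 : (Fin 3 → ℝ) →L[ℝ] ℝ).contDiff.contDiffOn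
    have hx2 : ContDiffOn ℝ (⊤ : ℕ∞) (fun x : Fin 3 → ℝ => x 2) Omega :=
      (ContinuousLinearMap.proj 2 : (Fin 3 → ℝ) →L[ℝ] ℝ).contDiff.contDiffOn
    exact ((Real.contDiff_exp.comp_contDiffOn hcomp.neg).mul hx1).prodMk
      ((Real.contDiff_exp.comp_contDiffOn (hcomp.neg.div_const τ)).mul hx2)
  · -- values in circle
    intro x hx
    have h := heq (x 1, x 2) (hmaps x hx)
    have e1 : Real.exp (-φ (x 1, x 2)) ^ 2 = Real.exp (-2 * φ (x 1, x 2)) := by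
      rw [sq, ← Real.exp_add]; ring_nf
    have e2 : Real.exp (-φ (x 1, x 2) / τ) ^ 2 = Real.exp (-2 * φ (x 1, x 2) / τ) := by
      rw [sq, ← Real.exp_add]; ring_nf
    calc (Real.exp (-φ (x 1, x 2)) * x 1) ^ 2 + (Real.exp (-φ (x 1, x 2) / τ) * x 2) ^ 2
        = Real.exp (-2 * φ (x 1, x 2)) * (x 1) ^ 2
          + Real.exp (-2 * φ (x 1, x 2) / τ) * (x 2) ^ 2 := by
          rw [mul_pow, mul_pow, e1, e2]
      _ = 1 := h
  · -- submersion
    intro x hx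
    set p : ℝ × ℝ := (x 1, x 2) with hpdef
    have hp : p ≠ 0 := hmaps x hx
    have hU : IsOpen {y : ℝ × ℝ | y ≠ 0} := isOpen_compl_singleton
    have hφat : ContDiffAt ℝ (⊤ : ℕ∞) φ p := hφ.contDiffAt (hU.mem_nhds hp)
    have hdφ : HasFDerivAt φ (fderiv ℝ φ p) p :=
      (hφat.differentiableAt (by simp)).hasFDerivAt
    set L := fderiv ℝ φ p with hL
    have hexp1 : HasFDerivAt (fun y : ℝ × ℝ => Real.exp (-φ y))
        (Real.exp (-φ p) • (-L)) p := hdφ.neg.exp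
    have hexp2 : HasFDerivAt (fun y : ℝ × ℝ => Real.exp (-φ y / τ))
        (Real.exp (-φ p / τ) • (τ⁻¹ • (-L))) p := by
      have h := (hdφ.neg.mul_const τ⁻¹).exp
      simpa [div_eq_mul_inv] using h
    have hfst : HasFDerivAt (fun y : ℝ × ℝ => y.1)
        (ContinuousLinearMap.fst ℝ ℝ ℝ) p := (ContinuousLinearMap.fst ℝ ℝ ℝ).hasFDerivAt
    have hsnd : HasFDerivAt (fun y : ℝ × ℝ => y.2)
        (ContinuousLinearMap.snd ℝ ℝ ℝ) p := (ContinuousLinearMap.snd ℝ ℝ ℝ).hasFDerivAt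
    have hG1 := hexp1.mul hfst
    have hG2 := hexp2.mul hsnd
    have hG := HasFDerivAt.prodMk hG1 hG2
    have hπx : π x = p := rfl
    set D : (Fin 3 → ℝ) →L[ℝ] ℝ × ℝ :=
      ((Real.exp (-φ p) • ContinuousLinearMap.fst ℝ ℝ ℝ
          + p.1 • Real.exp (-φ p) • (-L)).prod
        (Real.exp (-φ p / τ) • ContinuousLinearMap.snd ℝ ℝ ℝ
          + p.2 • Real.exp (-φ p / τ) • τ⁻¹ • (-L))).comp π with hD
    have hPi : HasFDerivAt
        (fun x : Fin 3 → ℝ =>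
          ((Real.exp (-φ (x 1, x 2)) * x 1, Real.exp (-φ (x 1, x 2) / τ) * x 2) : ℝ × ℝ))
        D x := HasFDerivAt.comp x (hπx ▸ hG) π.hasFDerivAt
    intro hz
    rw [hPi.fderiv] at hz
    have hv1 := congrFun (congrArg DFunLike.coe hz) (Pi.single 1 1)
    have hv2 := congrFun (congrArg DFunLike.coe hz) (Pi.single 2 1)
    have hπ1 : π (Pi.single 1 1) = ((1 : ℝ), (0 : ℝ)) := by
      simp [hπ, Pi.single_eq_same, Pi.single_eq_of_ne]
    have hπ2 : π (Pi.single 2 1) = ((0 : ℝ), (1 : ℝ)) := by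
      simp [hπ, Pi.single_eq_same, Pi.single_eq_of_ne]
    rw [ContinuousLinearMap.comp_apply, hπ1] at hv1
    rw [ContinuousLinearMap.comp_apply, hπ2] at hv2
    simp only [ContinuousLinearMap.prod_apply, ContinuousLinearMap.add_apply,
      ContinuousLinearMap.smul_apply, ContinuousLinearMap.neg_apply,
      ContinuousLinearMap.coe_fst', ContinuousLinearMap.coe_snd',
      Prod.mk_eq_zero, smul_eq_mul, Prod.ext_iff,
      ContinuousLinearMap.zero_apply, Prod.fst_zero, Prod.snd_zero] at hv1 hv2
    obtain ⟨h11, h12⟩ := hv1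
    obtain ⟨h21, h22⟩ := hv2
    set α := L (1, 0) with hα
    set β := L (0, 1) with hβ
    have he := (Real.exp_pos (-φ p)).ne'
    have hf := (Real.exp_pos (-φ p / τ)).ne'
    have E1 : 1 - x 1 * α = 0 := by
      have h : Real.exp (-φ p) * (1 - x 1 * α) = 0 := by linear_combination h11
      exact (mul_eq_zero.mp h).resolve_left he
    have E2 : x 2 * (τ⁻¹ * α) = 0 := by
      have h : Real.exp (-φ p / τ) * (x 2 * (τ⁻¹ * α)) = 0 := by linear_combination -h12
      exact (mul_eq_zero.mp h).resolve_left hf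
    have E3 : 1 - x 2 * (τ⁻¹ * β) = 0 := by
      have h : Real.exp (-φ p / τ) * (1 - x 2 * (τ⁻¹ * β)) = 0 := by linear_combination h22
      exact (mul_eq_zero.mp h).resolve_left hf
    have hτi : τ⁻¹ ≠ 0 := inv_ne_zero hτ0
    have E2' : x 2 * α = 0 := by
      rcases mul_eq_zero.mp E2 with h | h
      · simp [h]
      · rcases mul_eq_zero.mp h with h' | h'
        · exact absurd h' hτi
        · simp [h']
    have hx2 : x 2 = 0 := by linear_combination x 2 * E1 + x 1 * E2'
    rw [hx2] at E3
    simp at E3
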